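/- Let R be a commutative ring with unity, G = ⟨x | x^n = 1⟩ a cyclic group of order n, and σ, τ the R-algebra endomorphisms of RG with σ(x) = x^u and τ(x) = x^{u+v}, where u, v ∈ {0, 1, …, n−1}. Suppose the characteristic of R divides gcd(v,n) (with the convention gcd(0,n) = n). Then every R-linear map D : RG → RG with D(1) = 0 satisfying D(x^k) = (Σ_{i+j=k−1, i,j ≥ 0} σ(x)^i τ(x)^j)·D(x) for every k ∈ {1, 2, …, n−1} is a (σ,τ)-derivation of RG. -/

import Mathlib

/-!
Write `S k = ∑_{i+j=k-1} σ(x)^i τ(x)^j`, so the hypothesis says `D(x^k) = S k · D(x)`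
for `0 < k < n`. The sums satisfy the cocycle identity
`S (s + t) = S s · τ(x)^t + σ(x)^s · S t`, which is exactly the `(σ,τ)`-Leibniz rule on
monomials. Since `x^n = 1`, the formula `D(x^k) = S k · D(x)` extends to all `k` as soon as
`S n = 0`. Here `S n = x^{u(n-1)} ∑_{j<n} x^{vj}`, and as `x^v` has order dividing
`n / gcd(v,n)`, the last sum is `gcd(v,n)` copies of a shorter one, hence zero when the
characteristic divides `gcd(v,n)`.
-/

/-- The generator `x` of the cyclic group of order `n`, viewed inside the group ring
`R[Multiplicative (ZMod n)]`. -/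
noncomputable def xgen (R : Type*) [CommRing R] (n : ℕ) :
    MonoidAlgebra R (Multiplicative (ZMod n)) :=
  MonoidAlgebra.of R (Multiplicative (ZMod n)) (Multiplicative.ofAdd (1 : ZMod n))

open Finset

section GeomSum

variable {A : Type*} [CommSemiring A]

theorem geom_sum₂_add (a b : A) (s t : ℕ) :
    ∑ i ∈ range (s + t), a ^ i * b ^ (s + t - 1 - i) =
      (∑ i ∈ range s, a ^ i * b ^ (s - 1 - i)) * b ^ t +
        a ^ s * ∑ i ∈ range t, a ^ i * b ^ (t - 1 - i) := by
  rw [sum_range_add, sum_mul, mul_sum]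
  congr 1
  · refine sum_congr rfl fun i hi => ?_
    rw [show s + t - 1 - i = (s - 1 - i) + t by grind, pow_add, mul_assoc]
  · refine sum_congr rfl fun i _ => ?_
    rw [show s + t - 1 - (s + i) = t - 1 - i by omega, pow_add, mul_assoc]

theorem geom_sum₂_self_mul (a c : A) (n : ℕ) :
    ∑ i ∈ range n, a ^ i * (a * c) ^ (n - 1 - i) = a ^ (n - 1) * ∑ i ∈ range n, c ^ i := by
  rw [← sum_range_reflect, mul_sum]
  refine sum_congr rfl fun i hi => ?_
  rw [show n - 1 - (n - 1 - i) = i by grind, mul_pow, ← mul_assoc, ← pow_add,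
    show n - 1 - i + i = n - 1 by grind]

theorem geom_sum_range_mul_of_pow_eq_one {c : A} {m : ℕ} (hc : c ^ m = 1) (d : ℕ) :
    ∑ i ∈ range (d * m), c ^ i = d • ∑ i ∈ range m, c ^ i := by
  induction d with
  | zero => simp
  | succ d ih =>
    rw [Nat.succ_mul, sum_range_add, ih, succ_nsmul]
    congr 1
    refine sum_congr rfl fun i _ => ?_
    rw [pow_add, pow_mul', hc, one_pow, one_mul]

theorem geom_sum₂_pow_pow_add_eq_zero {X : A} {n : ℕ} (hX : X ^ n = 1) (u v : ℕ)
    (hgcd : (Nat.gcd v n : A) = 0) :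
    ∑ i ∈ range n, (X ^ u) ^ i * (X ^ (u + v)) ^ (n - 1 - i) = 0 := by
  obtain ⟨v', hv'⟩ := Nat.gcd_dvd_left v n
  obtain ⟨n', hn'⟩ := Nat.gcd_dvd_right v n
  have hvn : v * n' = n * v' := by
    conv_lhs => rw [hv']
    conv_rhs => rw [hn']
    ring
  have hXv : (X ^ v) ^ n' = 1 := by rw [← pow_mul, hvn, pow_mul, hX, one_pow]
  rw [pow_add, geom_sum₂_self_mul, hn', geom_sum_range_mul_of_pow_eq_one hXv, ← hn',
    nsmul_eq_mul, hgcd, zero_mul, mul_zero]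

end GeomSum

theorem map_pow_eq_geom_sum₂_mul {A : Type*} [CommSemiring A] (D : A → A) {X a b : A} {n : ℕ}
    (hn : 0 < n) (hX : X ^ n = 1) (hb : b ^ n = 1)
    (hS : ∑ i ∈ range n, a ^ i * b ^ (n - 1 - i) = 0) (hD1 : D 1 = 0)
    (hrel : ∀ k, 0 < k → k < n →
      D (X ^ k) = (∑ i ∈ range k, a ^ i * b ^ (k - 1 - i)) * D X)
    (k : ℕ) : D (X ^ k) = (∑ i ∈ range k, a ^ i * b ^ (k - 1 - i)) * D X := by
  induction k using Nat.strong_induction_on with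
  | _ k ih =>
    rcases lt_or_ge k n with hkn | hkn
    · rcases Nat.eq_zero_or_pos k with rfl | hk
      · simpa using hD1
      · exact hrel k hk hkn
    · obtain ⟨m, rfl⟩ := Nat.exists_eq_add_of_le' hkn
      rw [pow_add, hX, mul_one, ih m (by omega), geom_sum₂_add, hb, hS, mul_one, mul_zero,
        add_zero]

def IsSigmaTauDerivation {R A : Type*} [CommSemiring R] [Semiring A] [Algebra R A]
    (σ τ : A →ₐ[R] A) (D : A →ₗ[R] A) : Prop :=
  ∀ a b, D (a * b) = D a * τ b + σ a * D b

theorem leibniz_pow_of_map_pow_eq_geom_sum₂_mul {R A : Type*} [CommSemiring R] [CommSemiring A]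
    [Algebra R A] (σ τ : A →ₐ[R] A) (D : A →ₗ[R] A) (X : A)
    (hD : ∀ k, D (X ^ k) = (∑ i ∈ range k, σ X ^ i * τ X ^ (k - 1 - i)) * D X) (s t : ℕ) :
    D (X ^ s * X ^ t) = D (X ^ s) * τ (X ^ t) + σ (X ^ s) * D (X ^ t) := by
  rw [← pow_add, hD, hD, hD, geom_sum₂_add, map_pow, map_pow]
  ring

theorem MonoidAlgebra.isSigmaTauDerivation_of_of {R G : Type*} [CommSemiring R] [Monoid G]
    (σ τ : MonoidAlgebra R G →ₐ[R] MonoidAlgebra R G)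
    (D : MonoidAlgebra R G →ₗ[R] MonoidAlgebra R G)
    (h : ∀ g g', D (of R G g * of R G g') =
      D (of R G g) * τ (of R G g') + σ (of R G g) * D (of R G g')) :
    IsSigmaTauDerivation σ τ D := by
  intro p q
  induction p using MonoidAlgebra.induction_on with
  | of g =>
    induction q using MonoidAlgebra.induction_on with
    | of g' => exact h g g'
    | add q q' hq hq' =>
      rw [mul_add, map_add, hq, hq', map_add, map_add, mul_add, mul_add, add_add_add_comm]
    | smul r q hq => simp only [mul_smul_comm, map_smul, hq, smul_add]
  | add p p' hp hp' =>
    rw [add_mul, map_add, hp, hp', map_add, map_add, add_mul, add_mul, add_add_add_comm]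
  | smul r p hp => simp only [smul_mul_assoc, map_smul, hp, smul_add]

section CyclicGroupRing

variable (R : Type*) [CommRing R] (n : ℕ)

theorem xgen_pow (k : ℕ) :
    xgen R n ^ k = MonoidAlgebra.of R _ (Multiplicative.ofAdd (k : ZMod n)) := by
  rw [xgen, ← map_pow, ← ofAdd_nsmul, nsmul_one]

theorem xgen_pow_self : xgen R n ^ n = 1 := by
  rw [xgen_pow, ZMod.natCast_self, ofAdd_zero, map_one]

theorem of_eq_xgen_pow [NeZero n] (g : Multiplicative (ZMod n)) :
    MonoidAlgebra.of R _ g = xgen R n ^ (Multiplicative.toAdd g).val := by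
  rw [xgen_pow, ZMod.natCast_zmod_val, ofAdd_toAdd]

end CyclicGroupRing

theorem stmt13_general {R : Type*} [CommRing R] (n u v : ℕ) [NeZero n]
    (hchar : ringChar R ∣ Nat.gcd v n)
    (σ τ : MonoidAlgebra R (Multiplicative (ZMod n)) →ₐ[R] MonoidAlgebra R (Multiplicative (ZMod n)))
    (hσ : σ (xgen R n) = xgen R n ^ u) (hτ : τ (xgen R n) = xgen R n ^ (u + v))
    (D : MonoidAlgebra R (Multiplicative (ZMod n)) →ₗ[R] MonoidAlgebra R (Multiplicative (ZMod n)))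
    (hD1 : D 1 = 0)
    (hrel : ∀ k : ℕ, 1 ≤ k → k ≤ n - 1 →
      D (xgen R n ^ k) =
        (∑ p ∈ Finset.HasAntidiagonal.antidiagonal (k - 1), σ (xgen R n) ^ p.1 * τ (xgen R n) ^ p.2) *
          D (xgen R n)) :
    ∀ a b, D (a * b) = D a * τ b + σ a * D b := by
  have hX := xgen_pow_self R n
  have hS : ∑ i ∈ range n, σ (xgen R n) ^ i * τ (xgen R n) ^ (n - 1 - i) = 0 := by
    rw [hσ, hτ]
    refine geom_sum₂_pow_pow_add_eq_zero hX u v ?_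
    rw [← map_natCast (algebraMap R _), (ringChar.spec R _).mpr hchar, map_zero]
  have hτX : τ (xgen R n) ^ n = 1 := by rw [hτ, ← pow_mul, pow_mul', hX, one_pow]
  have hD := map_pow_eq_geom_sum₂_mul D (NeZero.pos n) hX hτX hS hD1 fun k hk hkn => by
    obtain ⟨j, rfl⟩ := Nat.exists_eq_add_of_lt hk
    rw [hrel _ (by omega) (by omega), Nat.sum_antidiagonal_eq_sum_range_succ
      (fun i j => σ (xgen R n) ^ i * τ (xgen R n) ^ j)]
    simp only [zero_add, Nat.add_sub_cancel, Nat.succ_eq_add_one]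
  refine MonoidAlgebra.isSigmaTauDerivation_of_of σ τ D fun g g' => ?_
  rw [of_eq_xgen_pow R n g, of_eq_xgen_pow R n g']
  exact leibniz_pow_of_map_pow_eq_geom_sum₂_mul σ τ D _ hD _ _

/-- With `σ x = x^u`, `τ x = x^{u+v}` (`u, v < n`), if the characteristic
of `R` divides `gcd(v,n)`, then every `R`-linear map `D` with `D 1 = 0` satisfying the
relations (2.1) is a `(σ,τ)`-derivation. -/
theorem stmt13 {R : Type*} [CommRing R] (n u v : ℕ) [NeZero n]
    (hu : u < n) (hv : v < n)
    (hchar : ringChar R ∣ Nat.gcd v n)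
    (σ τ : MonoidAlgebra R (Multiplicative (ZMod n)) →ₐ[R] MonoidAlgebra R (Multiplicative (ZMod n)))
    (hσ : σ (xgen R n) = xgen R n ^ u) (hτ : τ (xgen R n) = xgen R n ^ (u + v))
    (D : MonoidAlgebra R (Multiplicative (ZMod n)) →ₗ[R] MonoidAlgebra R (Multiplicative (ZMod n)))
    (hD1 : D 1 = 0)
    (hrel : ∀ k : ℕ, 1 ≤ k → k ≤ n - 1 →
      D (xgen R n ^ k) =
        (∑ p ∈ Finset.HasAntidiagonal.antidiagonal (k - 1), σ (xgen R n) ^ p.1 * τ (xgen R n) ^ p.2) *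
          D (xgen R n)) :
    ∀ a b, D (a * b) = D a * τ b + σ a * D b :=
  stmt13_general n u v hchar σ τ hσ hτ D hD1 hrel
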